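/- arXiv:math/0703252 — 2 statements merged into one kernel-verified Lean document; each statement's English description precedes it below -/
import Mathlib

section
/- Let 0 < u₀ ≤ 1/2. Let ψ : [0,1] → ℝ be continuous piecewise affine, constant on [u₂, 1] for some u₂ < 1, and satisfying ψ(u) = u/u₀ − 1 for all u ∈ [0, u₀]. Define φ : [0,1] → ℝ by φ(u) = 0 for u ∈ [0, u₀] and φ(u) = ψ(u) for u ∈ [u₀, 1]. Then τ(φ) − τ(ψ) = −2/(1−u₀); consequently τ(ψ) − 4 ≤ τ(φ) < τ(ψ) − 2. -/
open MeasureTheory Set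

/-- `f : ℝ → ℝ` is *continuous piecewise affine* on `[0,1]`: it is continuous on `[0,1]`
and there is a finite partition `0 = t₀ < t₁ < ⋯ < t_m = 1` such that `f` is affine on
each subinterval `[t_{j}, t_{j+1}]`. -/
def CtsPiecewiseAffine (f : ℝ → ℝ) : Prop :=
  ContinuousOn f (Set.Icc (0:ℝ) 1) ∧
  ∃ (m : ℕ) (t : ℕ → ℝ), 0 < m ∧ t 0 = 0 ∧ t m = 1 ∧
    (∀ j < m, t j < t (j+1)) ∧
    (∀ j < m, ∃ a b : ℝ, ∀ x ∈ Set.Icc (t j) (t (j+1)), f x = a * x + b)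

/-- The *twist* of an edgepath-system function `f`:
`τ(f) = ∫₀¹ (2/(1−u)²)·f′(u) du`. -/
noncomputable def twist (f : ℝ → ℝ) : ℝ :=
  ∫ u in (0:ℝ)..1, (2/(1-u)^2) * deriv f u

/-!
On `[0, u₀]` the derivatives of `φ` and `ψ` are `0` and `1/u₀`, and on `(u₀, 1)` they agree,
so `τ(φ) − τ(ψ) = −(1/u₀) ∫₀^{u₀} 2/(1−u)² du = −2/(1−u₀)`. For `0 < u₀ ≤ 1/2` this lies in
`[−4, −2)`.
-/

open intervalIntegral

theorem deriv_eq_of_eqOn_Icc {f g : ℝ → ℝ} {c d u : ℝ} (h : EqOn f g (Icc c d))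
    (hu : u ∈ Ioo c d) : deriv f u = deriv g u :=
  (Filter.eventuallyEq_of_mem (Icc_mem_nhds hu.1 hu.2) h).deriv_eq

theorem deriv_eq_of_affine_on_Icc {f : ℝ → ℝ} {a b c d u : ℝ}
    (h : ∀ x ∈ Icc c d, f x = a * x + b) (hu : u ∈ Ioo c d) : deriv f u = a := by
  rw [deriv_eq_of_eqOn_Icc h hu]
  simp

theorem deriv_eq_zero_of_const_on_Icc {f : ℝ → ℝ} {k c d u : ℝ} (h : ∀ x ∈ Icc c d, f x = k)
    (hu : u ∈ Ioo c d) : deriv f u = 0 :=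
  deriv_eq_of_affine_on_Icc (b := k) (fun x hx => by rw [h x hx]; ring) hu

theorem CtsPiecewiseAffine.intervalIntegrable_deriv {f : ℝ → ℝ} (hf : CtsPiecewiseAffine f) :
    IntervalIntegrable (deriv f) volume 0 1 := by
  obtain ⟨-, m, t, -, ht0, htm, hmono, haff⟩ := hf
  suffices ∀ j ≤ m, IntervalIntegrable (deriv f) volume 0 (t j) from htm ▸ this m le_rfl
  intro j hj
  induction j with
  | zero => simp [ht0]
  | succ j ih =>
    obtain ⟨a, b, hab⟩ := haff j hj
    refine (ih (by omega)).trans ((intervalIntegrable_const (c := a)).congr_uIoo ?_)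
    rw [uIoo_of_le (hmono j hj).le]
    exact fun u hu => (deriv_eq_of_affine_on_Icc hab hu).symm

theorem continuousOn_two_div_one_sub_sq {b : ℝ} (hb : b < 1) :
    ContinuousOn (fun u : ℝ => 2 / (1 - u) ^ 2) (Iic b) :=
  continuousOn_const.div (by fun_prop) fun u hu =>
    pow_ne_zero 2 (sub_ne_zero.2 (ne_of_gt (lt_of_le_of_lt hu hb)))

theorem integral_two_div_one_sub_sq {a b : ℝ} (ha : a < 1) (hb : b < 1) :
    ∫ u in a..b, 2 / (1 - u) ^ 2 = 2 / (1 - b) - 2 / (1 - a) := by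
  have hsub : uIcc a b ⊆ Iic (max a b) := fun u hu => hu.2
  have hmax : max a b < 1 := max_lt ha hb
  refine integral_eq_sub_of_hasDerivAt (f := fun u => 2 / (1 - u)) (fun u hu => ?_)
    ((continuousOn_two_div_one_sub_sq hmax).mono hsub).intervalIntegrable
  have hne : 1 - u ≠ 0 := sub_ne_zero.2 (ne_of_gt (lt_of_le_of_lt (hsub hu) hmax))
  exact ((hasDerivAt_const u (2 : ℝ)).div ((hasDerivAt_id u).const_sub 1) hne).congr_deriv
    (by simp only [id]; ring)

theorem intervalIntegrable_twist_integrand {f : ℝ → ℝ} {u₂ c : ℝ} (hf : CtsPiecewiseAffine f)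
    (hu₂ : u₂ < 1) (hc : ∀ u ∈ Icc u₂ 1, f u = c) :
    IntervalIntegrable (fun u => 2 / (1 - u) ^ 2 * deriv f u) volume 0 1 := by
  set w := max u₂ 0
  have hw : w < 1 := max_lt hu₂ one_pos
  have head : IntervalIntegrable (fun u => 2 / (1 - u) ^ 2 * deriv f u) volume 0 w := by
    refine (hf.intervalIntegrable_deriv.mono_set ?_).continuousOn_mul
      ((continuousOn_two_div_one_sub_sq hw).mono fun u hu => ?_)
    · exact uIcc_subset_uIcc left_mem_uIcc (mem_uIcc_of_le (le_max_right _ _) hw.le)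
    · rw [uIcc_of_le (le_max_right _ _)] at hu
      exact hu.2
  have tail : IntervalIntegrable (fun u => 2 / (1 - u) ^ 2 * deriv f u) volume w 1 := by
    refine (intervalIntegrable_const (c := 0)).congr_uIoo fun u hu => ?_
    rw [uIoo_of_le hw.le] at hu
    simp [deriv_eq_zero_of_const_on_Icc hc ⟨lt_of_le_of_lt (le_max_left _ _) hu.1, hu.2⟩]
  exact head.trans tail

theorem integral_twist_integrand_of_affine {f : ℝ → ℝ} {a b c d : ℝ} (hcd : c ≤ d) (hd : d < 1)
    (h : ∀ x ∈ Icc c d, f x = a * x + b) :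
    ∫ u in c..d, 2 / (1 - u) ^ 2 * deriv f u = a * (2 / (1 - d) - 2 / (1 - c)) := by
  rw [integral_congr_Ioo_of_le hcd (g := fun u => 2 / (1 - u) ^ 2 * a)
      fun u hu => by simp only [deriv_eq_of_affine_on_Icc h hu],
    intervalIntegral.integral_mul_const, integral_two_div_one_sub_sq (lt_of_le_of_lt hcd hd) hd,
    mul_comm]

theorem twist_sub_twist_of_cut {φ ψ : ℝ → ℝ} {u₀ c : ℝ} (hu₀ : u₀ ∈ Icc (0 : ℝ) 1)
    (hψ : IntervalIntegrable (fun u => 2 / (1 - u) ^ 2 * deriv ψ u) volume 0 1)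
    (hφ0 : ∀ u ∈ Icc 0 u₀, φ u = c) (hφψ : EqOn φ ψ (Icc u₀ 1)) :
    twist φ - twist ψ = -∫ u in 0..u₀, 2 / (1 - u) ^ 2 * deriv ψ u := by
  have hφ'0 : EqOn (fun u => 2 / (1 - u) ^ 2 * deriv φ u) 0 (Ioo 0 u₀) := fun u hu => by
    simp [deriv_eq_zero_of_const_on_Icc hφ0 hu]
  have hφ'ψ' : EqOn (fun u => 2 / (1 - u) ^ 2 * deriv φ u)
      (fun u => 2 / (1 - u) ^ 2 * deriv ψ u) (Ioo u₀ 1) := fun u hu => by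
    simp only [deriv_eq_of_eqOn_Icc hφψ hu]
  have hψhead := hψ.mono_set (uIcc_subset_uIcc left_mem_uIcc (mem_uIcc_of_le hu₀.1 hu₀.2))
  have hψtail := hψ.mono_set (uIcc_subset_uIcc (mem_uIcc_of_le hu₀.1 hu₀.2) right_mem_uIcc)
  have hφhead : IntervalIntegrable (fun u => 2 / (1 - u) ^ 2 * deriv φ u) volume 0 u₀ :=
    (intervalIntegrable_const (c := 0)).congr_uIoo (uIoo_of_le hu₀.1 ▸ hφ'0.symm)
  have hφtail : IntervalIntegrable (fun u => 2 / (1 - u) ^ 2 * deriv φ u) volume u₀ 1 :=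
    hψtail.congr_uIoo (uIoo_of_le hu₀.2 ▸ hφ'ψ'.symm)
  rw [twist, twist, ← integral_add_adjacent_intervals hφhead hφtail,
    ← integral_add_adjacent_intervals hψhead hψtail, integral_congr_Ioo_of_le hu₀.1 hφ'0,
    integral_congr_Ioo_of_le hu₀.2 hφ'ψ']
  simp

/-- (Function-level form of Lemma 3.3(2)(a1).) Let `0 < u₀ ≤ 1/2`, and let `ψ` be
continuous piecewise affine on `[0,1]`, constant on `[u₂,1]` for some `u₂ < 1`, with
`ψ(u) = u/u₀ − 1` on `[0,u₀]`. Let `φ` be `0` on `[0,u₀]` and equal to `ψ` on `[u₀,1]`.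
Then `τ(φ) − τ(ψ) = −2/(1−u₀)`; consequently `τ(ψ) − 4 ≤ τ(φ) < τ(ψ) − 2`. -/
theorem stmt3 (u₀ : ℝ) (hu₀pos : 0 < u₀) (hu₀le : u₀ ≤ 1/2)
    (ψ : ℝ → ℝ) (hψ : CtsPiecewiseAffine ψ)
    (u₂ : ℝ) (hu₂ : u₂ < 1)
    (hc : ∃ c : ℝ, ∀ u ∈ Set.Icc u₂ (1:ℝ), ψ u = c)
    (hψform : ∀ u ∈ Set.Icc (0:ℝ) u₀, ψ u = u/u₀ - 1)
    (φ : ℝ → ℝ)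
    (hφ0 : ∀ u ∈ Set.Icc (0:ℝ) u₀, φ u = 0)
    (hφψ : ∀ u ∈ Set.Icc u₀ (1:ℝ), φ u = ψ u) :
    twist φ - twist ψ = -2/(1-u₀) ∧
    twist ψ - 4 ≤ twist φ ∧ twist φ < twist ψ - 2 := by
  obtain ⟨c, hc⟩ := hc
  have hu₀1 : u₀ < 1 := by linarith
  have hψaffine : ∀ u ∈ Icc 0 u₀, ψ u = 1 / u₀ * u + -1 := fun u hu => by
    rw [hψform u hu]; ring
  have hkey : twist φ - twist ψ = -2 / (1 - u₀) := by
    rw [twist_sub_twist_of_cut ⟨hu₀pos.le, hu₀1.le⟩ (intervalIntegrable_twist_integrand hψ hu₂ hc)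
      hφ0 hφψ, integral_twist_integrand_of_affine hu₀pos.le hu₀1 hψaffine]
    have : 1 - u₀ ≠ 0 := sub_ne_zero.2 hu₀1.ne'
    field_simp
    ring
  have hlower : 2 < 2 / (1 - u₀) := by rw [lt_div_iff₀ (by linarith)]; linarith
  have hupper : 2 / (1 - u₀) ≤ 4 := by rw [div_le_iff₀ (by linarith)]; linarith
  rw [neg_div] at hkey
  exact ⟨by rw [hkey, neg_div], by linarith, by linarith⟩
end

section
/- Let 1/2 < u₀ ≤ 2/3. Let ψ : [0,1] → ℝ be continuous piecewise affine, constant on [u₂, 1] for some u₂ < 1, such that ψ is concave and nondecreasing on [0, u₀], ψ is affine on [0, 1/2], ψ(0) = −1, ψ(1/2) < 0, and ψ(u₀) = 0. Define φ : [0,1] → ℝ by φ(u) = 0 for u ∈ [0, u₀] and φ(u) = ψ(u) for u ∈ [u₀, 1]. Then τ(ψ) − 6 ≤ τ(φ) < τ(ψ) − 4. -/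
open MeasureTheory Set

/-!
Outside `[0,u₀]` the functions `φ` and `ψ` agree, and `φ' = 0` on `(0,u₀)`, so
`τ(ψ) - τ(φ) = ∫₀^{u₀} w ψ'` with `w(u) = 2/(1-u)²`. Integrating by parts on each affine piece,
with `ψ(0) = -1` and `ψ(u₀) = 0`, this equals `2 - I` where `I = ∫₀^{u₀} w' ψ` and
`w'(u) = 4/(1-u)³ > 0`, so it suffices to show `-4 ≤ I < -2`.

By concavity `ψ` lies above its chord `u/u₀ - 1`, whose integral against `w'` is
`-2u₀/(1-u₀) ≥ -4` because `u₀ ≤ 2/3`. On `[0,1/2]` the function `ψ` is affine and contributes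
exactly `4ψ(1/2) - 2 < -2`, while on `[1/2,u₀]` monotonicity gives `ψ ≤ ψ(u₀) = 0`.
-/

open intervalIntegral

theorem hasDerivAt_of_eq_affine {f : ℝ → ℝ} {a b p q x : ℝ}
    (h : ∀ y ∈ Icc a b, f y = p * y + q) (hx : x ∈ Ioo a b) : HasDerivAt f p x := by
  have hline : HasDerivAt (fun y => p * y + q) p x := by
    simpa using ((hasDerivAt_id x).const_mul p).add_const q
  exact hline.congr_of_eventuallyEq <| Filter.eventually_of_mem (Icc_mem_nhds hx.1 hx.2) h

/-- Unlike `CtsPiecewiseAffine`, this form of piecewise affinity restricts to subintervals and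
supports induction over the pieces. -/
inductive PiecewiseAffineOn (f : ℝ → ℝ) : ℝ → ℝ → Prop
  | affine {a b : ℝ} (p q : ℝ) (hab : a ≤ b) (h : ∀ x ∈ Icc a b, f x = p * x + q) :
      PiecewiseAffineOn f a b
  | append {a b c : ℝ} : PiecewiseAffineOn f a b → PiecewiseAffineOn f b c →
      PiecewiseAffineOn f a c

namespace PiecewiseAffineOn

variable {f : ℝ → ℝ} {a b : ℝ}

theorem le (hf : PiecewiseAffineOn f a b) : a ≤ b := by
  induction hf with
  | affine _ _ hab => exact hab
  | append _ _ ih₁ ih₂ => exact ih₁.trans ih₂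

theorem restrict (hf : PiecewiseAffineOn f a b) {c d : ℝ} (hac : a ≤ c) (hcd : c ≤ d)
    (hdb : d ≤ b) : PiecewiseAffineOn f c d := by
  induction hf generalizing c d with
  | affine p q _ h => exact affine p q hcd fun x hx => h x ⟨hac.trans hx.1, hx.2.trans hdb⟩
  | @append a m b _ _ ih₁ ih₂ =>
    rcases le_total d m with hdm | hmd
    · exact ih₁ hac hcd hdm
    rcases le_total m c with hmc | hcm
    · exact ih₂ hmc hcd hdb
    · exact append (ih₁ hac hcm le_rfl) (ih₂ le_rfl hmd hdb)

theorem continuousOn (hf : PiecewiseAffineOn f a b) : ContinuousOn f (Icc a b) := by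
  induction hf with
  | affine p q _ h => exact (continuousOn_congr h).2 (by fun_prop)
  | append h₁ h₂ ih₁ ih₂ =>
    rw [← Icc_union_Icc_eq_Icc h₁.le h₂.le]
    exact ih₁.union_of_isClosed ih₂ isClosed_Icc isClosed_Icc

theorem intervalIntegrable_deriv (hf : PiecewiseAffineOn f a b) :
    IntervalIntegrable (deriv f) volume a b := by
  induction hf with
  | affine p q hab h =>
    refine (intervalIntegrable_const (c := p)).congr_uIoo fun x hx => ?_
    rw [uIoo_of_le hab] at hx
    exact ((hasDerivAt_of_eq_affine h hx).deriv).symm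
  | append _ _ ih₁ ih₂ => exact ih₁.trans ih₂

theorem integral_mul_deriv_eq_deriv_mul (hf : PiecewiseAffineOn f a b) {g g' : ℝ → ℝ}
    (hg : ∀ x ∈ Icc a b, HasDerivAt g (g' x) x) (hg' : ContinuousOn g' (Icc a b)) :
    ∫ x in a..b, g x * deriv f x = g b * f b - g a * f a - ∫ x in a..b, g' x * f x := by
  have hgc : ContinuousOn g (Icc a b) := fun x hx => (hg x hx).continuousAt.continuousWithinAt
  induction hf with
  | affine p q hab h =>
    refine integral_mul_deriv_eq_deriv_mul_of_hasDerivAt (by rwa [uIcc_of_le hab])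
      (by rw [uIcc_of_le hab]; exact (affine p q hab h).continuousOn) (fun x hx => ?_)
      (fun x hx => ?_) (hg'.intervalIntegrable_of_Icc hab)
      (affine p q hab h).intervalIntegrable_deriv
    · rw [min_eq_left hab, max_eq_right hab] at hx
      exact hg x (Ioo_subset_Icc_self hx)
    · rw [min_eq_left hab, max_eq_right hab] at hx
      exact (hasDerivAt_of_eq_affine h hx).differentiableAt.hasDerivAt
  | @append a m b h₁ h₂ ih₁ ih₂ =>
    have ham := h₁.le
    have hmb := h₂.le
    have hsub₁ : Icc a m ⊆ Icc a b := Icc_subset_Icc_right hmb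
    have hsub₂ : Icc m b ⊆ Icc a b := Icc_subset_Icc_left ham
    have hint : ∀ {c d}, Icc c d ⊆ Icc a b → PiecewiseAffineOn f c d →
        IntervalIntegrable (fun x => g x * deriv f x) volume c d ∧
        IntervalIntegrable (fun x => g' x * f x) volume c d := fun hcd hf =>
      ⟨hf.intervalIntegrable_deriv.continuousOn_mul (by rw [uIcc_of_le hf.le]; exact hgc.mono hcd),
        ((hg'.mono hcd).mul hf.continuousOn).intervalIntegrable_of_Icc hf.le⟩
    rw [← integral_add_adjacent_intervals (hint hsub₁ h₁).1 (hint hsub₂ h₂).1,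
      ← integral_add_adjacent_intervals (hint hsub₁ h₁).2 (hint hsub₂ h₂).2,
      ih₁ (fun x hx => hg x (hsub₁ hx)) (hg'.mono hsub₁) (hgc.mono hsub₁),
      ih₂ (fun x hx => hg x (hsub₂ hx)) (hg'.mono hsub₂) (hgc.mono hsub₂)]
    ring

end PiecewiseAffineOn

theorem CtsPiecewiseAffine.piecewiseAffineOn {f : ℝ → ℝ} (hf : CtsPiecewiseAffine f) :
    PiecewiseAffineOn f 0 1 := by
  obtain ⟨-, m, t, -, ht₀, htm, hlt, haff⟩ := hf
  have key : ∀ k ≤ m, PiecewiseAffineOn f (t 0) (t k) := by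
    intro k
    induction k with
    | zero => exact fun _ => .affine 0 (f (t 0)) le_rfl fun x hx => by simp [le_antisymm hx.2 hx.1]
    | succ k ih =>
      intro hk
      obtain ⟨p, q, hpq⟩ := haff k hk
      exact .append (ih (by omega)) (.affine p q (hlt k hk).le hpq)
  simpa [ht₀, htm] using key m le_rfl

theorem hasDerivAt_two_div_one_sub_sq {x : ℝ} (hx : x ≠ 1) :
    HasDerivAt (fun u => 2 / (1 - u) ^ 2) (4 / (1 - x) ^ 3) x := by
  have hx' : 1 - x ≠ 0 := sub_ne_zero.mpr hx.symm
  have hsq : HasDerivAt (fun u : ℝ => (1 - u) ^ 2) (2 * (1 - x) * -1) x := by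
    simpa using ((hasDerivAt_id' x).const_sub 1).fun_pow 2
  refine ((hasDerivAt_const x (2 : ℝ)).fun_div hsq (pow_ne_zero 2 hx')).congr_deriv ?_
  field_simp
  ring

theorem integral_four_div_one_sub_cube_mul {a b : ℝ} (ha : a < 1) (hb : b < 1) (α β : ℝ) :
    ∫ u in a..b, 4 / (1 - u) ^ 3 * (α * u + β) =
      ((α + β) * (2 / (1 - b) ^ 2) - 4 * α / (1 - b)) -
        ((α + β) * (2 / (1 - a) ^ 2) - 4 * α / (1 - a)) := by
  have hne : ∀ x ∈ uIcc a b, 1 - x ≠ 0 := fun x hx =>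
    (sub_pos.mpr (hx.2.trans_lt (max_lt ha hb))).ne'
  refine integral_eq_sub_of_hasDerivAt
    (f := fun u => (α + β) * (2 / (1 - u) ^ 2) - 4 * α / (1 - u)) (fun x hx => ?_)
    (ContinuousOn.intervalIntegrable ?_)
  · have hx1 : x ≠ 1 := fun h => hne x hx (by rw [h, sub_self])
    have hinv := (hasDerivAt_const x (4 * α)).fun_div ((hasDerivAt_id' x).const_sub 1) (hne x hx)
    refine (((hasDerivAt_two_div_one_sub_sq hx1).const_mul (α + β)).sub hinv).congr_deriv ?_
    field_simp [hne x hx]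
    ring
  · exact (continuousOn_const.div (by fun_prop) fun x hx => pow_ne_zero 3 (hne x hx)).mul
      (by fun_prop)

theorem four_div_one_sub_cube_nonneg {u : ℝ} (hu : u < 1) : 0 ≤ 4 / (1 - u) ^ 3 := by
  have := sub_pos.2 hu
  positivity

theorem continuousOn_four_div_one_sub_cube : ContinuousOn (fun u : ℝ => 4 / (1 - u) ^ 3) (Iio 1) :=
  continuousOn_const.div (by fun_prop) fun _ hx => pow_ne_zero 3 (sub_pos.2 hx).ne'

theorem intervalIntegrable_four_div_one_sub_cube_mul {f : ℝ → ℝ} {a b : ℝ} (hab : a ≤ b)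
    (hb : b < 1) (hf : ContinuousOn f (Icc a b)) :
    IntervalIntegrable (fun u => 4 / (1 - u) ^ 3 * f u) volume a b :=
  ((continuousOn_four_div_one_sub_cube.mono fun _ hu => hu.2.trans_lt hb).mul
    hf).intervalIntegrable_of_Icc hab

theorem PiecewiseAffineOn.intervalIntegrable_two_div_one_sub_sq_mul_deriv {f : ℝ → ℝ}
    (hf : PiecewiseAffineOn f 0 1) {b c : ℝ} (hb : b < 1) (hc : ∀ x ∈ Icc b 1, f x = c) :
    IntervalIntegrable (fun u => 2 / (1 - u) ^ 2 * deriv f u) volume 0 1 := by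
  set b' := max b 0
  have hb' : b' < 1 := max_lt hb one_pos
  have hweight : ContinuousOn (fun u : ℝ => 2 / (1 - u) ^ 2) (uIcc 0 b') := fun x hx =>
    have hx1 : x < 1 := hx.2.trans_lt (max_lt one_pos hb')
    (hasDerivAt_two_div_one_sub_sq hx1.ne).continuousAt.continuousWithinAt
  have hconst : EqOn f (fun _ => c) (Ioo b' 1) := fun x hx =>
    hc x ⟨(le_max_left _ _).trans hx.1.le, hx.2.le⟩
  refine ((hf.restrict le_rfl (le_max_right _ _) hb'.le).intervalIntegrable_deriv.continuousOn_mul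
    hweight).trans ((intervalIntegrable_const (c := 0)).congr_uIoo fun x hx => ?_)
  rw [uIoo_of_le hb'.le] at hx
  simp [hconst.deriv isOpen_Ioo hx]

theorem twist_sub_twist_eq_integral {f g : ℝ → ℝ} {a : ℝ} (ha₀ : 0 ≤ a) (ha₁ : a ≤ 1)
    (hf : IntervalIntegrable (fun u => 2 / (1 - u) ^ 2 * deriv f u) volume 0 1)
    (hg₀ : EqOn g 0 (Ioo 0 a)) (hgf : EqOn g f (Ioo a 1)) :
    twist f - twist g = ∫ u in 0..a, 2 / (1 - u) ^ 2 * deriv f u := by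
  have hf₁ : IntervalIntegrable (fun u => 2 / (1 - u) ^ 2 * deriv f u) volume 0 a :=
    hf.mono_set (by simp only [uIcc_of_le, ha₀, zero_le_one]; exact Icc_subset_Icc_right ha₁)
  have hf₂ : IntervalIntegrable (fun u => 2 / (1 - u) ^ 2 * deriv f u) volume a 1 :=
    hf.mono_set (by simp only [uIcc_of_le, ha₁, zero_le_one]; exact Icc_subset_Icc_left ha₀)
  have hg₀' : EqOn (fun u => 2 / (1 - u) ^ 2 * deriv g u) 0 (Ioo 0 a) := fun x hx => by
    simp [hg₀.deriv isOpen_Ioo hx]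
  have hgf' : EqOn (fun u => 2 / (1 - u) ^ 2 * deriv g u) (fun u => 2 / (1 - u) ^ 2 * deriv f u)
      (Ioo a 1) := fun x hx => by
    simp [hgf.deriv isOpen_Ioo hx]
  have hg₁ : IntervalIntegrable (fun u => 2 / (1 - u) ^ 2 * deriv g u) volume 0 a :=
    (intervalIntegrable_const (c := 0)).congr_uIoo (uIoo_of_le ha₀ ▸ hg₀'.symm)
  have hg₂ : IntervalIntegrable (fun u => 2 / (1 - u) ^ 2 * deriv g u) volume a 1 :=
    hf₂.congr_uIoo (uIoo_of_le ha₁ ▸ hgf'.symm)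
  rw [twist, twist, ← integral_add_adjacent_intervals hf₁ hf₂,
    ← integral_add_adjacent_intervals hg₁ hg₂, integral_congr_Ioo_of_le ha₀ hg₀',
    integral_congr_Ioo_of_le ha₁ hgf']
  simp

theorem neg_two_mul_div_le_integral_of_concaveOn {ψ : ℝ → ℝ} {u₀ : ℝ} (h₀ : 0 < u₀) (h₁ : u₀ < 1)
    (hconc : ConcaveOn ℝ (Icc 0 u₀) ψ) (hcont : ContinuousOn ψ (Icc 0 u₀))
    (hψ0 : ψ 0 = -1) (hψu₀ : ψ u₀ = 0) :
    -(2 * u₀ / (1 - u₀)) ≤ ∫ u in 0..u₀, 4 / (1 - u) ^ 3 * ψ u := by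
  have hchord : ∀ u ∈ Icc 0 u₀, (1 / u₀) * u + -1 ≤ ψ u := by
    intro u hu
    have h := hconc.2 (left_mem_Icc.2 h₀.le) (right_mem_Icc.2 h₀.le)
      (sub_nonneg.2 ((div_le_one h₀).2 hu.2)) (div_nonneg hu.1 h₀.le) (sub_add_cancel 1 (u / u₀))
    simp only [smul_eq_mul, hψ0, hψu₀, mul_zero, add_zero, zero_add,
      div_mul_cancel₀ u h₀.ne'] at h
    linarith [one_div_mul_eq_div u₀ u]
  calc -(2 * u₀ / (1 - u₀))
      = ∫ u in 0..u₀, 4 / (1 - u) ^ 3 * ((1 / u₀) * u + -1) := by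
        rw [integral_four_div_one_sub_cube_mul (by linarith) h₁]
        field_simp [(sub_pos.2 h₁).ne']
        ring
    _ ≤ ∫ u in 0..u₀, 4 / (1 - u) ^ 3 * ψ u := by
        refine integral_mono_on h₀.le
          (intervalIntegrable_four_div_one_sub_cube_mul h₀.le h₁ (by fun_prop))
          (intervalIntegrable_four_div_one_sub_cube_mul h₀.le h₁ hcont) fun u hu => ?_
        exact mul_le_mul_of_nonneg_left (hchord u hu)
          (four_div_one_sub_cube_nonneg (hu.2.trans_lt h₁))

theorem integral_le_of_affineOn_of_nonpos {ψ : ℝ → ℝ} {u₀ p q : ℝ} (h₀ : 1 / 2 ≤ u₀)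
    (h₁ : u₀ < 1) (hcont : ContinuousOn ψ (Icc 0 u₀))
    (haff : ∀ x ∈ Icc (0 : ℝ) (1 / 2), ψ x = p * x + q) (hnonpos : ∀ x ∈ Icc (1 / 2) u₀, ψ x ≤ 0) :
    ∫ u in 0..u₀, 4 / (1 - u) ^ 3 * ψ u ≤ 2 * p + 6 * q := by
  have hint : ∀ {a b}, 0 ≤ a → a ≤ b → b ≤ u₀ →
      IntervalIntegrable (fun u => 4 / (1 - u) ^ 3 * ψ u) volume a b := fun ha hab hb =>
    intervalIntegrable_four_div_one_sub_cube_mul hab (hb.trans_lt h₁)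
      (hcont.mono (Icc_subset_Icc ha hb))
  have hleft : ∫ u in 0..(1 / 2), 4 / (1 - u) ^ 3 * ψ u = 2 * p + 6 * q := by
    rw [integral_congr (g := fun u => 4 / (1 - u) ^ 3 * (p * u + q)) fun u hu => by
        rw [uIcc_of_le (by norm_num)] at hu; simp only [haff u hu],
      integral_four_div_one_sub_cube_mul (by norm_num) (by norm_num)]
    ring
  have hright : ∫ u in (1 / 2)..u₀, 4 / (1 - u) ^ 3 * ψ u ≤ 0 := by
    refine (integral_mono_on (by linarith) (hint (by norm_num) h₀ le_rfl)
      (intervalIntegrable_const (c := 0)) fun u hu => ?_).trans_eq integral_zero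
    exact mul_nonpos_of_nonneg_of_nonpos (four_div_one_sub_cube_nonneg (hu.2.trans_lt h₁))
      (hnonpos u hu)
  rw [← integral_add_adjacent_intervals (hint le_rfl (by norm_num) h₀)
    (hint (by norm_num) h₀ le_rfl), hleft]
  linarith

/-- (Function-level form of Lemma 3.3(2)(a2).) Let `1/2 < u₀ ≤ 2/3`. Let `ψ` be
continuous piecewise affine on `[0,1]`, constant on `[u₂,1]` for some `u₂ < 1`, concave
and nondecreasing on `[0,u₀]`, affine on `[0,1/2]`, with `ψ(0) = −1`, `ψ(1/2) < 0`, and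
`ψ(u₀) = 0`. Let `φ` be `0` on `[0,u₀]` and equal to `ψ` on `[u₀,1]`.
Then `τ(ψ) − 6 ≤ τ(φ) < τ(ψ) − 4`. -/
theorem stmt4 (u₀ : ℝ) (hu₀gt : 1/2 < u₀) (hu₀le : u₀ ≤ 2/3)
    (ψ : ℝ → ℝ) (hψ : CtsPiecewiseAffine ψ)
    (u₂ : ℝ) (hu₂ : u₂ < 1)
    (hc : ∃ c : ℝ, ∀ u ∈ Set.Icc u₂ (1:ℝ), ψ u = c)
    (hconc : ConcaveOn ℝ (Set.Icc (0:ℝ) u₀) ψ)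
    (hmono : MonotoneOn ψ (Set.Icc (0:ℝ) u₀))
    (haff : ∃ a b : ℝ, ∀ x ∈ Set.Icc (0:ℝ) (1/2:ℝ), ψ x = a * x + b)
    (hψ0 : ψ 0 = -1) (hψhalf : ψ (1/2) < 0) (hψu₀ : ψ u₀ = 0)
    (φ : ℝ → ℝ)
    (hφ0 : ∀ u ∈ Set.Icc (0:ℝ) u₀, φ u = 0)
    (hφψ : ∀ u ∈ Set.Icc u₀ (1:ℝ), φ u = ψ u) :
    twist ψ - 6 ≤ twist φ ∧ twist φ < twist ψ - 4 := by
  obtain ⟨c, hc⟩ := hc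
  obtain ⟨p, q, hpq⟩ := haff
  have hu₀ : u₀ < 1 := by linarith
  have hPW := hψ.piecewiseAffineOn
  have hcont : ContinuousOn ψ (Icc 0 u₀) := hψ.1.mono (Icc_subset_Icc_right hu₀.le)
  have hdiff : twist ψ - twist φ = 2 - ∫ u in 0..u₀, 4 / (1 - u) ^ 3 * ψ u := by
    rw [twist_sub_twist_eq_integral (by linarith) hu₀.le
      (hPW.intervalIntegrable_two_div_one_sub_sq_mul_deriv hu₂ hc)
      (fun x hx => hφ0 x (Ioo_subset_Icc_self hx)) (fun x hx => hφψ x (Ioo_subset_Icc_self hx)),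
      (hPW.restrict le_rfl (by linarith) hu₀.le).integral_mul_deriv_eq_deriv_mul
        (fun x hx => hasDerivAt_two_div_one_sub_sq (hx.2.trans_lt hu₀).ne)
        (continuousOn_four_div_one_sub_cube.mono fun _ hx => hx.2.trans_lt hu₀)]
    norm_num [hψ0, hψu₀]
  have hlower := neg_two_mul_div_le_integral_of_concaveOn (by linarith) hu₀ hconc hcont hψ0 hψu₀
  have hupper := integral_le_of_affineOn_of_nonpos hu₀gt.le hu₀ hcont hpq fun x hx =>
    hψu₀ ▸ hmono ⟨by linarith [hx.1], hx.2⟩ ⟨by linarith, le_rfl⟩ hx.2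
  have hq : q = -1 := by simpa [hψ0] using (hpq 0 ⟨le_rfl, by norm_num⟩).symm
  have hp : p / 2 + q < 0 := by linarith [hpq (1 / 2) ⟨by norm_num, le_rfl⟩]
  have hu₀' : 2 * u₀ / (1 - u₀) ≤ 4 := by rw [div_le_iff₀ (by linarith)]; linarith
  constructor <;> linarith
end
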